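/- Let μ, r̂ > 0, α ≥ 1, and let L ≥ 1 be an integer. Then for every r > 0, ∑_{i=0}^∞ |δ_i| · r^{αi + αμL − 1} / Γ(αi + αμL) < r^{αμL − 1} · Γ(αμ)^L · ( 1/Γ(Lαμ) + 2·L·exp(μ·(r/r̂)^α) − 2·L ). -/

import Mathlib

open MeasureTheory Real

noncomputable def deltaCoef (α μ rh : ℝ) (L : ℕ) : ℕ → ℝ
  | 0 => Real.Gamma (α * μ) ^ L
  | (i + 1) =>
      (1 / (((i : ℝ) + 1) * Real.Gamma (α * μ))) *
        ∑ l ∈ Finset.range (i + 1),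
          deltaCoef α μ rh L (i - l) *
            ((((l : ℝ) + 1) * (L : ℝ) + ((l : ℝ) + 1) - ((i : ℝ) + 1)) *
              Real.Gamma (α * (((l : ℝ) + 1) + μ)) *
              (-μ * rh ^ (-α)) ^ (l + 1) / (Nat.factorial (l + 1) : ℝ))
  termination_by i => i
  decreasing_by omega

/-! The δ_i are the coefficients of the L-th power of
f = ∑ Γ(α(l + μ)) (-μ r̂^{-α})^l / l! · X^l: the recurrence is J. C. P. Miller's formula for the
coefficients of a power of a power series, obtained from f · (f^L)' = L f' f^L. Taking absolute
values of the coefficients of f gives a majorant F, and by induction on L the i-th coefficient of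
F^L is at most Γ(αμ)^L / Γ(αμL) · K^i Γ(αi + αμL) / i!, K = μ r̂^{-α}. The induction step is the
Beta integral: ∑ C(i,l) Γ(αl + p) Γ(α(i-l) + q) = Γ(αi + p + q) ∫₀¹ t^{p-1} (1-t)^{q-1}
(t^α + (1-t)^α)^i dt ≤ Γ(αi + p + q) B(p, q), since t^α + (1-t)^α ≤ 1 for α ≥ 1. The series is then
dominated termwise by an exponential series with sum Γ(αμ)^L / Γ(αμL) · r^{αμL-1} exp(μ(r/r̂)^α),
and the strict bound follows from Γ > 1/2 on (0, ∞). -/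

open Finset PowerSeries
open scoped Nat

namespace Real

lemma ofReal_cpow_mul_one_sub_cpow {p q x : ℝ} (hx : x ∈ Set.Icc (0 : ℝ) 1) :
    (x : ℂ) ^ ((p : ℂ) - 1) * (1 - (x : ℂ)) ^ ((q : ℂ) - 1) =
      ((x ^ (p - 1) * (1 - x) ^ (q - 1) : ℝ) : ℂ) := by
  push_cast [Complex.ofReal_cpow hx.1, Complex.ofReal_cpow (sub_nonneg.2 hx.2)]
  rfl

lemma intervalIntegrable_rpow_mul_one_sub_rpow {p q : ℝ} (hp : 0 < p) (hq : 0 < q) :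
    IntervalIntegrable (fun t : ℝ => t ^ (p - 1) * (1 - t) ^ (q - 1)) volume 0 1 := by
  have h := Complex.betaIntegral_convergent (u := p) (v := q) (by simpa) (by simpa)
  refine ⟨IntegrableOn.congr_fun (f := fun x : ℝ => RCLike.re ((x : ℂ) ^ ((p : ℂ) - 1) *
    (1 - (x : ℂ)) ^ ((q : ℂ) - 1))) h.1.re (fun x hx => ?_) measurableSet_Ioc, by simp⟩
  simp only [ofReal_cpow_mul_one_sub_cpow (Set.Ioc_subset_Icc_self hx), RCLike.re_to_complex,
    Complex.ofReal_re]

lemma Gamma_mul_Gamma_eq_mul_integral {p q : ℝ} (hp : 0 < p) (hq : 0 < q) :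
    Gamma p * Gamma q = Gamma (p + q) * ∫ t in (0 : ℝ)..1, t ^ (p - 1) * (1 - t) ^ (q - 1) := by
  have h := Complex.Gamma_mul_Gamma_eq_betaIntegral (s := p) (t := q) (by simpa) (by simpa)
  rw [Complex.betaIntegral, intervalIntegral.integral_congr (g := fun x : ℝ =>
    ((x ^ (p - 1) * (1 - x) ^ (q - 1) : ℝ) : ℂ)) fun x hx => ofReal_cpow_mul_one_sub_cpow
      (by rwa [Set.uIcc_of_le zero_le_one] at hx), intervalIntegral.integral_ofReal] at h
  rw [← Complex.ofReal_add, Complex.Gamma_ofReal, Complex.Gamma_ofReal, Complex.Gamma_ofReal] at h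
  exact_mod_cast h

lemma rpow_add_one_sub_rpow_le_one {α t : ℝ} (hα : 1 ≤ α) (ht : t ∈ Set.Icc (0 : ℝ) 1) :
    t ^ α + (1 - t) ^ α ≤ 1 := by
  have h₁ := rpow_le_self_of_le_one ht.1 ht.2 hα
  have h₂ := rpow_le_self_of_le_one (sub_nonneg.2 ht.2) (by linarith [ht.1]) hα
  linarith

lemma sum_choose_mul_rpow_mul_one_sub_rpow_le {α p q t : ℝ} (hα : 1 ≤ α)
    (ht : t ∈ Set.Ioo (0 : ℝ) 1) (i : ℕ) :
    ∑ l ∈ range (i + 1), (i.choose l : ℝ) *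
        (t ^ (α * l + p - 1) * (1 - t) ^ (α * ((i : ℝ) - l) + q - 1)) ≤
      t ^ (p - 1) * (1 - t) ^ (q - 1) := by
  obtain ⟨ht₀, ht₁⟩ := ht
  have hs : 0 < 1 - t := sub_pos.2 ht₁
  have hterm : ∀ l ∈ range (i + 1), (i.choose l : ℝ) *
      (t ^ (α * l + p - 1) * (1 - t) ^ (α * ((i : ℝ) - l) + q - 1)) =
        t ^ (p - 1) * (1 - t) ^ (q - 1) * ((t ^ α) ^ l * ((1 - t) ^ α) ^ (i - l) * i.choose l) := by
    intro l hl
    have hli : l ≤ i := Nat.lt_succ_iff.1 (mem_range.1 hl)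
    rw [show α * l + p - 1 = α * l + (p - 1) by ring,
      show α * ((i : ℝ) - l) + q - 1 = α * ((i - l : ℕ) : ℝ) + (q - 1) by
        rw [Nat.cast_sub hli]; ring,
      rpow_add ht₀, rpow_add hs, rpow_mul ht₀.le, rpow_mul hs.le, rpow_natCast, rpow_natCast]
    ring
  rw [sum_congr rfl hterm, ← mul_sum, ← add_pow]
  refine mul_le_of_le_one_right (by positivity) (pow_le_one₀ (by positivity) ?_)
  exact rpow_add_one_sub_rpow_le_one hα ⟨ht₀.le, ht₁.le⟩

lemma sum_choose_mul_Gamma_mul_Gamma_le {α p q : ℝ} (hα : 1 ≤ α) (hp : 0 < p) (hq : 0 < q)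
    (i : ℕ) :
    ∑ l ∈ range (i + 1), (i.choose l : ℝ) * (Gamma (α * l + p) * Gamma (α * ((i : ℝ) - l) + q)) ≤
      Gamma (α * i + (p + q)) * (Gamma p * Gamma q / Gamma (p + q)) := by
  have hpos : ∀ l ∈ range (i + 1), 0 < α * l + p ∧ 0 < α * ((i : ℝ) - l) + q := fun l hl => by
    have : (l : ℝ) ≤ i := by exact_mod_cast Nat.lt_succ_iff.1 (mem_range.1 hl)
    constructor <;> nlinarith
  have hint : ∀ l ∈ range (i + 1), IntervalIntegrable (fun t : ℝ => (i.choose l : ℝ) *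
      (t ^ (α * l + p - 1) * (1 - t) ^ (α * ((i : ℝ) - l) + q - 1))) volume 0 1 := fun l hl =>
    (intervalIntegrable_rpow_mul_one_sub_rpow (hpos l hl).1 (hpos l hl).2).const_mul _
  have hbeta : ∀ l ∈ range (i + 1), (i.choose l : ℝ) *
      (Gamma (α * l + p) * Gamma (α * ((i : ℝ) - l) + q)) = Gamma (α * i + (p + q)) *
        ∫ t in (0 : ℝ)..1, (i.choose l : ℝ) *
          (t ^ (α * l + p - 1) * (1 - t) ^ (α * ((i : ℝ) - l) + q - 1)) := fun l hl => by
    rw [Gamma_mul_Gamma_eq_mul_integral (hpos l hl).1 (hpos l hl).2,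
      intervalIntegral.integral_const_mul, show α * l + p + (α * ((i : ℝ) - l) + q) =
        α * i + (p + q) by ring]
    ring
  rw [sum_congr rfl hbeta, ← mul_sum, ← intervalIntegral.integral_finsetSum hint,
    Gamma_mul_Gamma_eq_mul_integral hp hq,
    mul_div_cancel_left₀ _ (Gamma_pos_of_pos (add_pos hp hq)).ne']
  refine mul_le_mul_of_nonneg_left ?_ (Gamma_pos_of_pos (by nlinarith)).le
  exact intervalIntegral.integral_mono_on_of_le_Ioo zero_le_one
    (by simpa only [sum_fn] using IntervalIntegrable.sum _ hint)
    (intervalIntegrable_rpow_mul_one_sub_rpow hp hq)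
    fun t ht => sum_choose_mul_rpow_mul_one_sub_rpow_le hα ht i

lemma one_le_Gamma_of_two_le {x : ℝ} (hx : 2 ≤ x) : 1 ≤ Gamma x :=
  Gamma_two ▸ Gamma_strictMonoOn_Ici.monotoneOn Set.self_mem_Ici hx hx

lemma half_lt_Gamma {x : ℝ} (hx : 0 < x) : 1 / 2 < Gamma x := by
  have hΓ := Gamma_pos_of_pos hx
  rcases lt_or_ge x 1 with hx₁ | hx₁
  · have h := one_le_Gamma_of_two_le (by linarith : 2 ≤ x + 1 + 1)
    rw [Gamma_add_one (by positivity), Gamma_add_one hx.ne'] at h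
    nlinarith [mul_pos hx (by linarith : 0 < 1 - x)]
  rcases lt_or_ge x 2 with hx₂ | hx₂
  · have h := one_le_Gamma_of_two_le (by linarith : 2 ≤ x + 1)
    rw [Gamma_add_one hx.ne'] at h
    nlinarith
  · linarith [one_le_Gamma_of_two_le hx₂]

lemma exp_div_Gamma_lt {q c L : ℝ} (hq : 0 < q) (hc : 0 < c) (hL : 1 ≤ L) :
    exp c / Gamma q < 1 / Gamma q + 2 * L * exp c - 2 * L := by
  have hΓ := Gamma_pos_of_pos hq
  have hinv : 1 / Gamma q < 2 := by
    rw [div_lt_iff₀ hΓ]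
    linarith [half_lt_Gamma hq]
  have he : 0 < exp c - 1 := by linarith [add_one_lt_exp hc.ne']
  calc exp c / Gamma q = 1 / Gamma q + (exp c - 1) * (1 / Gamma q) := by ring
    _ < 1 / Gamma q + (exp c - 1) * (2 * L) := by gcongr; linarith
    _ = _ := by ring

lemma summable_and_tsum_le_of_abs_le {d : ℕ → ℝ} {α q B K r : ℝ} (hα : 0 ≤ α) (hq : 0 < q)
    (hr : 0 < r) (hd : ∀ i : ℕ, |d i| ≤ B * (K ^ i * Gamma (α * i + q) / i !)) :
    Summable (fun i : ℕ => |d i| * r ^ (α * i + q - 1) / Gamma (α * i + q)) ∧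
      ∑' i : ℕ, |d i| * r ^ (α * i + q - 1) / Gamma (α * i + q) ≤
        B * r ^ (q - 1) * exp (K * r ^ α) := by
  have hexp : HasSum (fun i : ℕ => B * r ^ (q - 1) * ((K * r ^ α) ^ i / i !))
      (B * r ^ (q - 1) * exp (K * r ^ α)) :=
    exp_eq_exp_ℝ ▸ (NormedSpace.expSeries_div_hasSum_exp (K * r ^ α)).mul_left _
  have hle : ∀ i : ℕ, |d i| * r ^ (α * i + q - 1) / Gamma (α * i + q) ≤
      B * r ^ (q - 1) * ((K * r ^ α) ^ i / i !) := fun i => by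
    have hΓ := Gamma_pos_of_pos (by positivity : 0 < α * i + q)
    calc |d i| * r ^ (α * i + q - 1) / Gamma (α * i + q)
        ≤ B * (K ^ i * Gamma (α * i + q) / i !) * r ^ (α * i + q - 1) / Gamma (α * i + q) := by
          gcongr
          exact hd i
      _ = _ := by
          rw [show α * i + q - 1 = α * i + (q - 1) by ring, rpow_add hr, rpow_mul hr.le,
            rpow_natCast]
          field_simp
          ring
  have hsum := Summable.of_nonneg_of_le (fun i => by positivity) hle hexp.summable
  exact ⟨hsum, hsum.tsum_le_tsum hle hexp.summable |>.trans_eq hexp.tsum_eq⟩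

end Real

namespace PowerSeries

section CommRing

variable {R : Type*} [CommRing R]

lemma mul_derivative_pow (f : R⟦X⟧) (L : ℕ) :
    f * derivative R (f ^ L) = L • (derivative R f * f ^ L) := by
  cases L with
  | zero => simp
  | succ L =>
    rw [Derivation.leibniz_pow, Nat.add_sub_cancel, pow_succ]
    simp only [smul_eq_mul, nsmul_eq_mul]
    ring

lemma succ_mul_coeff_zero_mul_coeff_pow (f : R⟦X⟧) (L m : ℕ) :
    ((m : R) + 1) * coeff 0 f * coeff (m + 1) (f ^ L) =
      ∑ l ∈ range (m + 1),
        (((l : R) + 1) * L - ((m : R) - l)) * coeff (l + 1) f * coeff (m - l) (f ^ L) := by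
  have key := congrArg (coeff m) (mul_derivative_pow f L)
  rw [coeff_mul, nsmul_eq_mul, ← map_natCast (C (R := R)), coeff_C_mul, coeff_mul,
    Nat.sum_antidiagonal_eq_sum_range_succ_mk, Nat.sum_antidiagonal_eq_sum_range_succ_mk,
    sum_range_succ'] at key
  have hshift : ∀ l ∈ range m, coeff (l + 1) f * (coeff (m - (l + 1) + 1) (f ^ L) *
      ((m - (l + 1) : ℕ) + 1 : R)) = ((m : R) - l) * coeff (l + 1) f * coeff (m - l) (f ^ L) :=
    fun l hl => by
      have hlm : l + 1 ≤ m := mem_range.1 hl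
      rw [show m - (l + 1) + 1 = m - l by omega, Nat.cast_sub hlm]
      push_cast
      ring
  simp only [coeff_derivative, sum_congr rfl hshift, Nat.sub_zero, Nat.succ_eq_add_one] at key
  have hlast : ∑ l ∈ range (m + 1), ((m : R) - l) * coeff (l + 1) f * coeff (m - l) (f ^ L) =
      ∑ l ∈ range m, ((m : R) - l) * coeff (l + 1) f * coeff (m - l) (f ^ L) := by
    simp [sum_range_succ]
  have hsplit : ∑ l ∈ range (m + 1),
      (((l : R) + 1) * L - ((m : R) - l)) * coeff (l + 1) f * coeff (m - l) (f ^ L) =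
        L * ∑ l ∈ range (m + 1), coeff (l + 1) f * ((l : R) + 1) * coeff (m - l) (f ^ L) -
          ∑ l ∈ range (m + 1), ((m : R) - l) * coeff (l + 1) f * coeff (m - l) (f ^ L) := by
    rw [mul_sum, ← sum_sub_distrib]
    exact sum_congr rfl fun l _ => by ring
  rw [hsplit, hlast]
  linear_combination key

end CommRing

section Ordered

variable {R : Type*} [CommRing R] [LinearOrder R] [IsStrictOrderedRing R]

lemma coeff_pow_nonneg {F : R⟦X⟧} (hF : ∀ n, 0 ≤ coeff n F) (L n : ℕ) :
    0 ≤ coeff n (F ^ L) := by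
  induction L generalizing n with
  | zero => rw [pow_zero, coeff_one]; split_ifs <;> simp
  | succ L ih =>
    rw [pow_succ, coeff_mul]
    exact sum_nonneg fun x _ => mul_nonneg (ih x.1) (hF x.2)

lemma abs_coeff_pow_le {f F : R⟦X⟧} (h : ∀ n, |coeff n f| ≤ coeff n F) (L n : ℕ) :
    |coeff n (f ^ L)| ≤ coeff n (F ^ L) := by
  have hF n : 0 ≤ coeff n F := (abs_nonneg _).trans (h n)
  induction L generalizing n with
  | zero => rw [pow_zero, pow_zero, coeff_one]; split_ifs <;> simp
  | succ L ih =>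
    rw [pow_succ, pow_succ, coeff_mul, coeff_mul]
    refine (abs_sum_le_sum_abs _ _).trans (sum_le_sum fun x _ => ?_)
    rw [abs_mul]
    exact mul_le_mul (ih x.1) (h x.2) (abs_nonneg _) (coeff_pow_nonneg hF L x.1)

end Ordered

end PowerSeries

noncomputable def gammaSeries (α p K : ℝ) : ℝ⟦X⟧ :=
  PowerSeries.mk fun l => Gamma (α * l + p) * K ^ l / l !

section gammaSeries

variable {α p K : ℝ}

lemma coeff_zero_gammaSeries : coeff 0 (gammaSeries α p K) = Gamma p := by
  simp [gammaSeries]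

lemma coeff_gammaSeries_nonneg (hα : 0 ≤ α) (hp : 0 < p) (hK : 0 ≤ K) (n : ℕ) :
    0 ≤ coeff n (gammaSeries α p K) := by
  rw [gammaSeries, coeff_mk]
  have := Gamma_pos_of_pos (by positivity : 0 < α * n + p)
  positivity

lemma abs_coeff_gammaSeries (hα : 0 ≤ α) (hp : 0 < p) (n : ℕ) :
    |coeff n (gammaSeries α p K)| = coeff n (gammaSeries α p |K|) := by
  simp only [gammaSeries, coeff_mk, abs_div, abs_mul, abs_pow, Nat.abs_cast,
    abs_of_pos (Gamma_pos_of_pos (by positivity : 0 < α * n + p))]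

lemma coeff_gammaSeries_pow_le (hα : 1 ≤ α) (hp : 0 < p) (hK : 0 ≤ K) {L : ℕ} (hL : 1 ≤ L) (i : ℕ) :
    coeff i (gammaSeries α p K ^ L) ≤
      Gamma p ^ L / Gamma (p * L) * (K ^ i * Gamma (α * i + p * L) / i !) := by
  have hα₀ : 0 < α := one_pos.trans_le hα
  induction L, hL using Nat.le_induction generalizing i with
  | base =>
    rw [pow_one, gammaSeries, coeff_mk, pow_one, Nat.cast_one, mul_one]
    have := (Gamma_pos_of_pos hp).ne'
    exact (by field_simp : _ = _).le
  | succ L hL ih =>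
    have hpL : 0 < p * L := mul_pos hp (by exact_mod_cast hL)
    have hΓp := Gamma_pos_of_pos hp
    have hΓpL := Gamma_pos_of_pos hpL
    have hΓpL' := Gamma_pos_of_pos (add_pos hpL hp)
    set c : ℝ := Gamma p ^ L * K ^ i / (Gamma (p * L) * i !)
    have hterm : ∀ l ∈ range (i + 1),
        coeff l (gammaSeries α p K ^ L) * coeff (i - l) (gammaSeries α p K) ≤
          c * ((i.choose l : ℝ) * (Gamma (α * l + p * L) * Gamma (α * ((i : ℝ) - l) + p))) := by
      intro l hl
      have hli : l ≤ i := Nat.lt_succ_iff.1 (mem_range.1 hl)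
      refine (mul_le_mul_of_nonneg_right (ih l)
        (coeff_gammaSeries_nonneg hα₀.le hp hK _)).trans_eq ?_
      rw [gammaSeries, coeff_mk, Nat.cast_sub hli, Nat.cast_choose ℝ hli]
      have : K ^ i = K ^ l * K ^ (i - l) := by rw [← pow_add, Nat.add_sub_cancel' hli]
      simp only [c, this]
      field_simp
    calc coeff i (gammaSeries α p K ^ (L + 1))
        = ∑ l ∈ range (i + 1),
            coeff l (gammaSeries α p K ^ L) * coeff (i - l) (gammaSeries α p K) := by
          rw [pow_succ, coeff_mul, Nat.sum_antidiagonal_eq_sum_range_succ_mk]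
      _ ≤ c * ∑ l ∈ range (i + 1),
            (i.choose l : ℝ) * (Gamma (α * l + p * L) * Gamma (α * ((i : ℝ) - l) + p)) := by
          rw [mul_sum]
          exact sum_le_sum hterm
      _ ≤ c * (Gamma (α * i + (p * L + p)) * (Gamma (p * L) * Gamma p / Gamma (p * L + p))) :=
          mul_le_mul_of_nonneg_left (sum_choose_mul_Gamma_mul_Gamma_le hα hpL hp i)
            (by positivity)
      _ = Gamma p ^ (L + 1) / Gamma (p * ↑(L + 1)) *
            (K ^ i * Gamma (α * i + p * ↑(L + 1)) / i !) := by
          rw [Nat.cast_succ, mul_add_one, ← add_assoc]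
          simp only [c]
          field_simp
          ring

end gammaSeries

lemma deltaCoef_eq_coeff_gammaSeries_pow {α μ : ℝ} (rh : ℝ) (hα : 0 < α) (hμ : 0 < μ) (L i : ℕ) :
    deltaCoef α μ rh L i = coeff i (gammaSeries α (α * μ) (-μ * rh ^ (-α)) ^ L) := by
  induction i using Nat.strong_induction_on with
  | _ i ih =>
    match i with
    | 0 =>
      rw [deltaCoef, coeff_zero_eq_constantCoeff_apply, map_pow,
        ← coeff_zero_eq_constantCoeff_apply, coeff_zero_gammaSeries]
    | i + 1 =>
      have hΓ := (Gamma_pos_of_pos (mul_pos hα hμ)).ne'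
      have hrec := succ_mul_coeff_zero_mul_coeff_pow (gammaSeries α (α * μ) (-μ * rh ^ (-α))) L i
      rw [coeff_zero_gammaSeries] at hrec
      rw [deltaCoef, one_div_mul_eq_div, div_eq_iff (mul_ne_zero (by positivity) hΓ),
        mul_comm (coeff (i + 1) _), hrec]
      refine sum_congr rfl fun l hl => ?_
      have hl' := mem_range.1 hl
      rw [ih (i - l) (by omega), gammaSeries, coeff_mk, Nat.cast_succ,
        show α * ((l : ℝ) + 1 + μ) = α * ((l : ℝ) + 1) + α * μ by ring]
      ring

lemma abs_deltaCoef_le {α μ rh : ℝ} (hμ : 0 < μ) (hrh : 0 < rh) (hα : 1 ≤ α) {L : ℕ}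
    (hL : 1 ≤ L) (i : ℕ) :
    |deltaCoef α μ rh L i| ≤ Gamma (α * μ) ^ L / Gamma (α * μ * L) *
      ((μ * rh ^ (-α)) ^ i * Gamma (α * i + α * μ * L) / i !) := by
  have hα₀ : 0 < α := one_pos.trans_le hα
  have hp : 0 < α * μ := mul_pos hα₀ hμ
  have hK : |-μ * rh ^ (-α)| = μ * rh ^ (-α) := by
    rw [neg_mul, abs_neg, abs_of_pos (by positivity)]
  rw [deltaCoef_eq_coeff_gammaSeries_pow rh hα₀ hμ]
  refine (abs_coeff_pow_le (fun n => (abs_coeff_gammaSeries hα₀.le hp n).le) L i).trans ?_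
  rw [hK]
  exact coeff_gammaSeries_pow_le hα hp (by positivity) hL i

/-- Exponential bound on the absolute sum-PDF series for α ≥ 1. -/
theorem sum_pdf_series_lt_exp_bound
    (α μ rh : ℝ) (hμ : 0 < μ) (hrh : 0 < rh) (hα : 1 ≤ α)
    (L : ℕ) (hL : 1 ≤ L) (r : ℝ) (hr : 0 < r) :
    Summable (fun i : ℕ =>
      |deltaCoef α μ rh L i| * r ^ (α * (i : ℝ) + α * μ * (L : ℝ) - 1) /
        Real.Gamma (α * (i : ℝ) + α * μ * (L : ℝ))) ∧
    (∑' i : ℕ,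
        |deltaCoef α μ rh L i| * r ^ (α * (i : ℝ) + α * μ * (L : ℝ) - 1) /
          Real.Gamma (α * (i : ℝ) + α * μ * (L : ℝ))) <
      r ^ (α * μ * (L : ℝ) - 1) * Real.Gamma (α * μ) ^ L *
        (1 / Real.Gamma ((L : ℝ) * α * μ) +
          2 * (L : ℝ) * Real.exp (μ * (r / rh) ^ α) - 2 * (L : ℝ)) := by
  have hα₀ : 0 < α := one_pos.trans_le hα
  have hL₁ : (1 : ℝ) ≤ L := by exact_mod_cast hL
  have hq : 0 < α * μ * L := by positivity
  obtain ⟨hsum, hle⟩ :=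
    summable_and_tsum_le_of_abs_le hα₀.le hq hr (abs_deltaCoef_le hμ hrh hα hL)
  refine ⟨hsum, hle.trans_lt ?_⟩
  have hc : μ * rh ^ (-α) * r ^ α = μ * (r / rh) ^ α := by
    rw [div_rpow hr.le hrh.le, rpow_neg hrh.le]
    ring
  rw [hc, show (L : ℝ) * α * μ = α * μ * L by ring]
  calc Gamma (α * μ) ^ L / Gamma (α * μ * L) * r ^ (α * μ * L - 1) * exp (μ * (r / rh) ^ α)
      = r ^ (α * μ * L - 1) * Gamma (α * μ) ^ L * (exp (μ * (r / rh) ^ α) / Gamma (α * μ * L)) := by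
        ring
    _ < _ := by
        gcongr
        exact exp_div_Gamma_lt hq (by positivity) hL₁
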